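/- arXiv:1608.01415 — 3 statements merged into one kernel-verified Lean document; each statement's English description precedes it below -/
import Mathlib

section
/- Let H < 1/2 and 0 ≤ t_0 ≤ t_1 ≤ ... ≤ t_n ≤ T, let Δ_j = B^H_{t_j} - B^H_{t_{j-1}}, and let ε_1,...,ε_n ∈ {-1,+1}. Then Var(Σ_{j=1}^n ε_j Δ_j) ≤ 2 Σ_{j=1}^n |t_j - t_{j-1}|^{2H}. -/
open MeasureTheory Real

/-!
The covariance matrix `K` of the increments of fractional Brownian motion along a partition
has nonpositive off-diagonal entries when `H ≤ 1/2` (the increments of a concave function of the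
gap shrink as the gap grows), and nonnegative row sums, since the `j`-th row sum is the covariance
of `Δ_j` with the increment over the whole partition. Hence `∑ k |K j k| ≤ 2 K j j`, and for
`|ε_j| ≤ 1` the quadratic form `∑ ε_j ε_k K j k` is at most `2 ∑ K j j = 2 ∑ |t_j - t_{j-1}|^{2H}`.
-/

theorem ConcaveOn.map_add_map_le_of_le {s : Set ℝ} {f : ℝ → ℝ} (hf : ConcaveOn ℝ s f)
    {x y h : ℝ} (hx : x ∈ s) (hyh : y + h ∈ s) (hxy : x ≤ y) (hh : 0 ≤ h) :
    f x + f (y + h) ≤ f y + f (x + h) := by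
  rcases (show x ≤ y + h by linarith).eq_or_lt with hL | hL
  · obtain rfl : h = 0 := by linarith
    obtain rfl : y = x := by linarith
    simp
  have hL' : 0 < y + h - x := by linarith
  -- `x + h` and `y` are the two convex combinations of `x` and `y + h` with swapped weights.
  have hw : (y - x) / (y + h - x) + h / (y + h - x) = 1 := by field_simp; ring
  have hxh := hf.2 hx hyh (div_nonneg (sub_nonneg.2 hxy) hL'.le) (div_nonneg hh hL'.le) hw
  have hy := hf.2 hx hyh (div_nonneg hh hL'.le) (div_nonneg (sub_nonneg.2 hxy) hL'.le)
    (by rw [add_comm]; exact hw)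
  simp only [smul_eq_mul] at hxh hy
  have exh : (y - x) / (y + h - x) * x + h / (y + h - x) * (y + h) = x + h := by
    field_simp; ring
  have ey : h / (y + h - x) * x + (y - x) / (y + h - x) * (y + h) = y := by
    field_simp; ring
  rw [exh] at hxh
  rw [ey] at hy
  have hsplit : ∀ z, (y - x) / (y + h - x) * z + h / (y + h - x) * z = z := fun z => by
    rw [← add_mul, hw, one_mul]
  linarith [hsplit (f x), hsplit (f (y + h))]

theorem Finset.sum_abs_le_two_mul_of_nonpos_of_ne {ι : Type*} [Fintype ι] {a : ι → ℝ} {j : ι}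
    (hoff : ∀ k, k ≠ j → a k ≤ 0) (hsum : 0 ≤ ∑ k, a k) :
    ∑ k, |a k| ≤ 2 * a j := by
  classical
  have hrest : ∑ k ∈ univ.erase j, |a k| = -∑ k ∈ univ.erase j, a k := by
    rw [← Finset.sum_neg_distrib]
    exact Finset.sum_congr rfl fun k hk => abs_of_nonpos (hoff k (Finset.ne_of_mem_erase hk))
  have hrest_nonpos : ∑ k ∈ univ.erase j, a k ≤ 0 :=
    Finset.sum_nonpos fun k hk => hoff k (Finset.ne_of_mem_erase hk)
  rw [← Finset.add_sum_erase _ _ (Finset.mem_univ j)] at hsum ⊢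
  rw [hrest, abs_of_nonneg (by linarith)]
  linarith

theorem sum_mul_mul_le_two_mul_sum_diag {ι : Type*} [Fintype ι] {K : ι → ι → ℝ} {ε : ι → ℝ}
    (hε : ∀ j, |ε j| ≤ 1) (hoff : ∀ j k, j ≠ k → K j k ≤ 0) (hrow : ∀ j, 0 ≤ ∑ k, K j k) :
    ∑ j, ∑ k, ε j * ε k * K j k ≤ 2 * ∑ j, K j j := by
  rw [Finset.mul_sum]
  refine Finset.sum_le_sum fun j _ => ?_
  calc ∑ k, ε j * ε k * K j k ≤ ∑ k, |K j k| := Finset.sum_le_sum fun k _ => by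
        calc ε j * ε k * K j k ≤ |ε j| * |ε k| * |K j k| := by
              rw [← abs_mul, ← abs_mul]; exact le_abs_self _
          _ ≤ |K j k| := mul_le_of_le_one_left (abs_nonneg _)
              (mul_le_one₀ (hε j) (abs_nonneg _) (hε k))
    _ ≤ 2 * K j j := Finset.sum_abs_le_two_mul_of_nonpos_of_ne
        (fun k hk => hoff j k (Ne.symm hk)) (hrow j)

theorem Fin.sum_univ_succ_sub_castSucc {M : Type*} [AddCommGroup M] {n : ℕ}
    (f : Fin (n + 1) → M) :
    ∑ i : Fin n, (f i.succ - f i.castSucc) = f (Fin.last n) - f 0 := by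
  induction n with
  | zero => simp
  | succ m ih =>
    have := ih (f ∘ Fin.castSucc)
    rw [Fin.sum_univ_castSucc]
    simp only [Function.comp_apply, Fin.succ_castSucc] at this ⊢
    rw [this]
    simp

section SecondMoment

variable {Ω : Type*} [MeasurableSpace Ω] {μ : Measure Ω}

theorem integral_sq_sum_mul {ι : Type*} [Fintype ι] {X : ι → Ω → ℝ}
    (hX : ∀ j, MemLp (X j) 2 μ) (c : ι → ℝ) :
    ∫ ω, (∑ j, c j * X j ω) ^ 2 ∂μ = ∑ j, ∑ k, c j * c k * ∫ ω, X j ω * X k ω ∂μ := by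
  have hint : ∀ j k, Integrable (fun ω => X j ω * X k ω) μ :=
    fun j k => (hX j).integrable_mul (hX k)
  have hexpand : (fun ω => (∑ j, c j * X j ω) ^ 2) =
      fun ω => ∑ j, ∑ k, c j * c k * (X j ω * X k ω) := by
    funext ω
    rw [sq, Finset.sum_mul_sum]
    exact Finset.sum_congr rfl fun j _ => Finset.sum_congr rfl fun k _ => by ring
  rw [hexpand, integral_finsetSum _ fun j _ =>
    integrable_finsetSum _ fun k _ => (hint j k).const_mul _]
  refine Finset.sum_congr rfl fun j _ => ?_
  rw [integral_finsetSum _ fun k _ => (hint j k).const_mul _]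
  exact Finset.sum_congr rfl fun k _ => integral_const_mul _ _

theorem integral_sub_mul_sub {τ : Type*} {B : τ → Ω → ℝ} {S : Set τ} {R : τ → τ → ℝ}
    (hmem : ∀ s ∈ S, MemLp (B s) 2 μ) (hcov : ∀ s ∈ S, ∀ u ∈ S, ∫ ω, B s ω * B u ω ∂μ = R s u)
    {a b c d : τ} (ha : a ∈ S) (hb : b ∈ S) (hc : c ∈ S) (hd : d ∈ S) :
    ∫ ω, (B b ω - B a ω) * (B d ω - B c ω) ∂μ = R b d - R b c - R a d + R a c := by
  have hint : ∀ s ∈ S, ∀ u ∈ S, Integrable (fun ω => B s ω * B u ω) μ :=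
    fun s hs u hu => (hmem s hs).integrable_mul (hmem u hu)
  have hexpand : (fun ω => (B b ω - B a ω) * (B d ω - B c ω)) = fun ω =>
      (B b ω * B d ω - B b ω * B c ω) - (B a ω * B d ω - B a ω * B c ω) := by
    funext ω; ring
  rw [hexpand, integral_sub, integral_sub (hint b hb d hd) (hint b hb c hc),
    integral_sub (hint a ha d hd) (hint a ha c hc),
    hcov b hb d hd, hcov b hb c hc, hcov a ha d hd, hcov a ha c hc]
  · ring
  · exact (hint b hb d hd).sub (hint b hb c hc)
  · exact (hint a ha d hd).sub (hint a ha c hc)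

end SecondMoment

noncomputable def fbmCov (p s u : ℝ) : ℝ := (1 / 2) * (s ^ p + u ^ p - |s - u| ^ p)

noncomputable def fbmIncrCov (p a b c d : ℝ) : ℝ :=
  fbmCov p b d - fbmCov p b c - fbmCov p a d + fbmCov p a c

theorem fbmIncrCov_eq (p a b c d : ℝ) :
    fbmIncrCov p a b c d = (|a - d| ^ p + |b - c| ^ p - |a - c| ^ p - |b - d| ^ p) / 2 := by
  simp only [fbmIncrCov, fbmCov]
  ring

theorem fbmIncrCov_comm (p a b c d : ℝ) : fbmIncrCov p a b c d = fbmIncrCov p c d a b := by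
  simp only [fbmIncrCov_eq, abs_sub_comm c, abs_sub_comm d]
  ring

theorem fbmIncrCov_self {p : ℝ} (hp : p ≠ 0) (a b : ℝ) : fbmIncrCov p a b a b = |b - a| ^ p := by
  simp only [fbmIncrCov_eq, sub_self, abs_zero, zero_rpow hp, abs_sub_comm a b]
  ring

theorem fbmIncrCov_nonpos {p : ℝ} (hp0 : 0 ≤ p) (hp1 : p ≤ 1) {a b c d : ℝ}
    (hab : a ≤ b) (hbc : b ≤ c) (hcd : c ≤ d) : fbmIncrCov p a b c d ≤ 0 := by
  have h := (concaveOn_rpow hp0 hp1).map_add_map_le_of_le (x := c - b) (y := c - a) (h := d - c)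
    (Set.mem_Ici.2 (by linarith)) (Set.mem_Ici.2 (by linarith)) (by linarith) (by linarith)
  rw [show c - a + (d - c) = d - a by ring, show c - b + (d - c) = d - b by ring] at h
  rw [fbmIncrCov_eq, abs_of_nonpos (by linarith : a - d ≤ 0),
    abs_of_nonpos (by linarith : b - c ≤ 0), abs_of_nonpos (by linarith : a - c ≤ 0),
    abs_of_nonpos (by linarith : b - d ≤ 0)]
  simp only [neg_sub]
  linarith

theorem fbmIncrCov_nonneg {p : ℝ} (hp : 0 ≤ p) {a b c d : ℝ}
    (hca : c ≤ a) (hab : a ≤ b) (hbd : b ≤ d) : 0 ≤ fbmIncrCov p a b c d := by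
  have hd : (d - b) ^ p ≤ (d - a) ^ p := rpow_le_rpow (by linarith) (by linarith) hp
  have hc : (a - c) ^ p ≤ (b - c) ^ p := rpow_le_rpow (by linarith) (by linarith) hp
  rw [fbmIncrCov_eq, abs_of_nonpos (by linarith : a - d ≤ 0),
    abs_of_nonneg (by linarith : 0 ≤ b - c), abs_of_nonneg (by linarith : 0 ≤ a - c),
    abs_of_nonpos (by linarith : b - d ≤ 0)]
  simp only [neg_sub]
  linarith

section Partition

variable {p : ℝ} {n : ℕ} {t : Fin (n + 1) → ℝ}

theorem sum_fbmIncrCov_partition (a b : ℝ) :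
    ∑ k : Fin n, fbmIncrCov p a b (t k.castSucc) (t k.succ) =
      fbmIncrCov p a b (t 0) (t (Fin.last n)) := by
  set g : Fin (n + 1) → ℝ := fun i => fbmCov p b (t i) - fbmCov p a (t i)
  calc ∑ k : Fin n, fbmIncrCov p a b (t k.castSucc) (t k.succ)
      = ∑ k : Fin n, (g k.succ - g k.castSucc) :=
        Finset.sum_congr rfl fun k _ => by simp only [fbmIncrCov, g]; ring
    _ = g (Fin.last n) - g 0 := Fin.sum_univ_succ_sub_castSucc g
    _ = fbmIncrCov p a b (t 0) (t (Fin.last n)) := by simp only [fbmIncrCov, g]; ring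

theorem fbmIncrCov_partition_nonpos (hp0 : 0 ≤ p) (hp1 : p ≤ 1) (ht : Monotone t) {j k : Fin n}
    (hjk : j ≠ k) : fbmIncrCov p (t j.castSucc) (t j.succ) (t k.castSucc) (t k.succ) ≤ 0 := by
  wlog hlt : j < k generalizing j k
  · rw [fbmIncrCov_comm]
    exact this hjk.symm (lt_of_le_of_ne (not_lt.1 hlt) hjk.symm)
  exact fbmIncrCov_nonpos hp0 hp1 (ht (Fin.castSucc_le_succ _))
    (ht (Fin.succ_le_castSucc_iff.2 hlt)) (ht (Fin.castSucc_le_succ _))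

theorem sum_fbmIncrCov_partition_nonneg (hp : 0 ≤ p) (ht : Monotone t) (j : Fin n) :
    0 ≤ ∑ k : Fin n, fbmIncrCov p (t j.castSucc) (t j.succ) (t k.castSucc) (t k.succ) := by
  rw [sum_fbmIncrCov_partition]
  exact fbmIncrCov_nonneg hp (ht (Fin.zero_le _)) (ht (Fin.castSucc_le_succ _))
    (ht (Fin.le_last _))

end Partition

theorem fbm_signed_sum_var_small_H_general {Ω : Type*} [MeasurableSpace Ω] (μ : Measure Ω)
    (H : ℝ) (hH : H ∈ Set.Ioo (0 : ℝ) (1 / 2)) (B : ℝ → Ω → ℝ)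
    (hmem : ∀ t, 0 ≤ t → MemLp (B t) 2 μ)
    (hcov : ∀ s t, 0 ≤ s → 0 ≤ t →
      ∫ ω, B s ω * B t ω ∂μ =
        (1 / 2) * (s ^ (2 * H) + t ^ (2 * H) - |s - t| ^ (2 * H)))
    (n : ℕ) (t : Fin (n + 1) → ℝ) (ht0 : 0 ≤ t 0) (hmono : Monotone t)
    (ε : Fin n → ℝ) (hε : ∀ j, ε j = 1 ∨ ε j = -1) :
    ∫ ω, (∑ j : Fin n, ε j * (B (t j.succ) ω - B (t j.castSucc) ω)) ^ 2 ∂μ ≤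
      2 * ∑ j : Fin n, |t j.succ - t j.castSucc| ^ (2 * H) := by
  obtain ⟨hH0, hH1⟩ := hH
  have ht_nonneg : ∀ i, 0 ≤ t i := fun i => ht0.trans (hmono (Fin.zero_le i))
  set K : Fin n → Fin n → ℝ := fun j k =>
    fbmIncrCov (2 * H) (t j.castSucc) (t j.succ) (t k.castSucc) (t k.succ)
  have hincr : ∀ j k : Fin n, ∫ ω, (B (t j.succ) ω - B (t j.castSucc) ω) *
      (B (t k.succ) ω - B (t k.castSucc) ω) ∂μ = K j k := fun j k =>
    integral_sub_mul_sub (S := Set.Ici 0) (R := fbmCov (2 * H)) hmem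
      (fun s hs u hu => hcov s u hs hu) (ht_nonneg _) (ht_nonneg _) (ht_nonneg _) (ht_nonneg _)
  calc _ = ∑ j : Fin n, ∑ k : Fin n, ε j * ε k * K j k := by
        simp only [← hincr]
        exact integral_sq_sum_mul (fun j => (hmem _ (ht_nonneg _)).sub (hmem _ (ht_nonneg _))) ε
    _ ≤ 2 * ∑ j : Fin n, K j j := by
        refine sum_mul_mul_le_two_mul_sum_diag (fun j => ?_) (fun j k hjk => ?_) (fun j => ?_)
        · rcases hε j with h | h <;> simp [h]
        · exact fbmIncrCov_partition_nonpos (by linarith) (by linarith) hmono hjk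
        · exact sum_fbmIncrCov_partition_nonneg (by linarith) hmono j
    _ = 2 * ∑ j : Fin n, |t j.succ - t j.castSucc| ^ (2 * H) := by
        simp only [K, fbmIncrCov_self (by positivity : 2 * H ≠ 0)]

/-- Let `H < 1/2` and `0 ≤ t_0 ≤ t_1 ≤ ... ≤ t_n ≤ T`, let
`Δ_j = B^H_{t_j} - B^H_{t_{j-1}}`, and let `ε_1,...,ε_n ∈ {-1,+1}`. Then
`Var(Σ_{j=1}^n ε_j Δ_j) ≤ 2 Σ_{j=1}^n |t_j - t_{j-1}|^{2H}`.
(The variance of the centered sum is its second moment.) -/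
theorem fbm_signed_sum_var_small_H {Ω : Type*} [MeasurableSpace Ω] (μ : Measure Ω)
    [IsProbabilityMeasure μ]
    (H : ℝ) (hH : H ∈ Set.Ioo (0 : ℝ) (1 / 2)) (B : ℝ → Ω → ℝ)
    (hmem : ∀ t, 0 ≤ t → MemLp (B t) 2 μ)
    (hzero : ∀ ω, B 0 ω = 0)
    (hcent : ∀ t, 0 ≤ t → ∫ ω, B t ω ∂μ = 0)
    (hcov : ∀ s t, 0 ≤ s → 0 ≤ t →
      ∫ ω, B s ω * B t ω ∂μ =
        (1 / 2) * (s ^ (2 * H) + t ^ (2 * H) - |s - t| ^ (2 * H)))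
    (n : ℕ) (T : ℝ) (t : Fin (n + 1) → ℝ) (ht0 : 0 ≤ t 0) (hmono : Monotone t)
    (htT : t (Fin.last n) ≤ T)
    (ε : Fin n → ℝ) (hε : ∀ j, ε j = 1 ∨ ε j = -1) :
    ∫ ω, (∑ j : Fin n, ε j * (B (t j.succ) ω - B (t j.castSucc) ω)) ^ 2 ∂μ ≤
      2 * ∑ j : Fin n, |t j.succ - t j.castSucc| ^ (2 * H) :=
  fbm_signed_sum_var_small_H_general μ H hH B hmem hcov n t ht0 hmono ε hε
end

section
/- Combining the two cases: for any H ∈ (0,1], any 0 ≤ t_0 ≤ ... ≤ t_n ≤ T, increments Δ_j = B^H_{t_j} - B^H_{t_{j-1}}, and signs ε_j ∈ {-1,+1}, one has Var(Σ_{j=1}^n ε_j Δ_j) ≤ 2 T^{2H} n^{(1-2H)_+}, where (x)_+ = max(x,0). -/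
/-!
Expanding the square, the second moment is the quadratic form `∑ ε_j ε_k C_jk` in the
covariances `C_jk` of the increments. For disjoint intervals `[a, b]`, `[c, d]` one has
`2 C = (c - b)^p + (d - a)^p - (d - b)^p - (c - a)^p` with `p = 2H`, and since
`(c - a) + (d - b) = (c - b) + (d - a)` with `c - a, d - b` in between, convexity (`p ≥ 1`) or
concavity (`p ≤ 1`) of `x ↦ x^p` fixes the sign of every off-diagonal `C_jk`.
If all `C_jk ≥ 0`, the form is at most `∑ C_jk = E (B_{t_n} - B_{t_0})² ≤ T^p`.
If the off-diagonal ones are `≤ 0`, it is at most `2 ∑ C_jj - ∑ C_jk ≤ 2 ∑ (t_j - t_{j-1})^p`,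
and Jensen's inequality for the concave power bounds this by `2 n^{1-p} T^p`.
-/

open MeasureTheory Real

theorem Fin.sum_succ_sub_castSucc {M : Type*} [AddCommGroup M] :
    ∀ {n : ℕ} (g : Fin (n + 1) → M), ∑ j : Fin n, (g j.succ - g j.castSucc) = g (Fin.last n) - g 0
  | 0, g => by simp
  | n + 1, g => by
    rw [Fin.sum_univ_castSucc]
    simp only [Fin.succ_castSucc]
    rw [Fin.sum_succ_sub_castSucc fun i => g i.castSucc]
    simp only [Fin.succ_last, Fin.castSucc_zero]
    abel

theorem ConvexOn.map_add_map_le {s : Set ℝ} {f : ℝ → ℝ} (hf : ConvexOn ℝ s f) {x y u v : ℝ}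
    (hx : x ∈ s) (hy : y ∈ s) (hu : u ∈ segment ℝ x y) (huv : u + v = x + y) :
    f u + f v ≤ f x + f y := by
  obtain ⟨a, b, ha, hb, hab, rfl⟩ := hu
  have hv : v = b • x + a • y := by
    simp only [smul_eq_mul] at huv ⊢
    linear_combination huv - (x + y) * hab
  have hu_le := hf.2 hx hy ha hb hab
  have hv_le := hf.2 hx hy hb ha ((add_comm b a).trans hab)
  rw [hv]
  simp only [smul_eq_mul] at hu_le hv_le ⊢
  linear_combination hu_le + hv_le + (f x + f y) * hab

theorem ConcaveOn.map_add_map_le {s : Set ℝ} {f : ℝ → ℝ} (hf : ConcaveOn ℝ s f) {x y u v : ℝ}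
    (hx : x ∈ s) (hy : y ∈ s) (hu : u ∈ segment ℝ x y) (huv : u + v = x + y) :
    f x + f y ≤ f u + f v := by
  have h := hf.neg.map_add_map_le hx hy hu huv
  simp only [Pi.neg_apply] at h
  linarith

theorem Real.sum_rpow_le_card_rpow_mul_rpow_sum {ι : Type*} (s : Finset ι) {δ : ι → ℝ}
    (hδ : ∀ i ∈ s, 0 ≤ δ i) {p : ℝ} (hp0 : 0 ≤ p) (hp1 : p ≤ 1) :
    ∑ i ∈ s, δ i ^ p ≤ (s.card : ℝ) ^ (1 - p) * (∑ i ∈ s, δ i) ^ p := by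
  rcases s.eq_empty_or_nonempty with rfl | hs
  · simp only [Finset.sum_empty]
    positivity
  have hcard : (0 : ℝ) < s.card := by exact_mod_cast hs.card_pos
  have hw : ∑ _i ∈ s, (s.card : ℝ)⁻¹ = 1 := by
    rw [Finset.sum_const, nsmul_eq_mul, mul_inv_cancel₀ hcard.ne']
  have jensen := (concaveOn_rpow hp0 hp1).le_map_sum (fun _ _ => inv_nonneg.2 hcard.le) hw hδ
  simp only [smul_eq_mul, ← Finset.mul_sum] at jensen
  rw [mul_rpow (inv_nonneg.2 hcard.le) (Finset.sum_nonneg hδ), inv_rpow hcard.le,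
    inv_mul_le_iff₀ hcard, ← mul_assoc, ← div_eq_mul_inv] at jensen
  rwa [rpow_sub hcard, rpow_one]

section QuadraticForm

variable {ι : Type*} [Fintype ι]

theorem sum_sum_mul_mul_le_sum_sum_abs {ε : ι → ℝ} (hε : ∀ i, |ε i| ≤ 1) (C : ι → ι → ℝ) :
    ∑ i, ∑ j, ε i * ε j * C i j ≤ ∑ i, ∑ j, |C i j| := by
  refine Finset.sum_le_sum fun i _ => Finset.sum_le_sum fun j _ => (le_abs_self _).trans ?_
  rw [abs_mul, abs_mul]
  exact mul_le_of_le_one_left (abs_nonneg _) (mul_le_one₀ (hε i) (abs_nonneg _) (hε j))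

theorem sum_sum_abs_eq_of_offDiag_nonpos {C : ι → ι → ℝ} (hdiag : ∀ i, 0 ≤ C i i)
    (hoff : ∀ i j, i ≠ j → C i j ≤ 0) :
    ∑ i, ∑ j, |C i j| = 2 * ∑ i, C i i - ∑ i, ∑ j, C i j := by
  classical
  have habs : ∀ i j, |C i j| = (if i = j then 2 * C i i else 0) - C i j := by
    intro i j
    by_cases hij : i = j
    · subst hij
      rw [if_pos rfl, abs_of_nonneg (hdiag i)]
      ring
    · rw [if_neg hij, abs_of_nonpos (hoff i j hij), zero_sub]
  simp only [habs, Finset.sum_sub_distrib, Finset.sum_ite_eq, Finset.mem_univ, if_true,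
    Finset.mul_sum]

end QuadraticForm

section SecondMoment

variable {Ω : Type*} [MeasurableSpace Ω] {μ : Measure Ω} {ι : Type*} [Fintype ι]
  {X : ι → Ω → ℝ}

theorem integral_sq_sum_eq_sum_sum_integral_mul (hX : ∀ i, MemLp (X i) 2 μ) :
    ∫ ω, (∑ i, X i ω) ^ 2 ∂μ = ∑ i, ∑ j, ∫ ω, X i ω * X j ω ∂μ := by
  have hint : ∀ i j, Integrable (fun ω => X i ω * X j ω) μ := fun i j =>
    (hX i).integrable_mul (hX j)
  simp_rw [sq, Finset.sum_mul_sum]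
  rw [integral_finsetSum _ fun i _ => integrable_finsetSum _ fun j _ => hint i j]
  exact Finset.sum_congr rfl fun i _ => integral_finsetSum _ fun j _ => hint i j

theorem integral_sq_sum_mul_eq_sum_sum_integral_mul (hX : ∀ i, MemLp (X i) 2 μ) (ε : ι → ℝ) :
    ∫ ω, (∑ i, ε i * X i ω) ^ 2 ∂μ = ∑ i, ∑ j, ε i * ε j * ∫ ω, X i ω * X j ω ∂μ := by
  rw [integral_sq_sum_eq_sum_sum_integral_mul fun i => (hX i).const_mul (ε i)]
  refine Finset.sum_congr rfl fun i _ => Finset.sum_congr rfl fun j _ => ?_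
  rw [← integral_const_mul]
  congr 1 with ω
  ring

end SecondMoment

/-- The second-moment structure of fractional Brownian motion with Hurst index `p / 2`. -/
structure HasFBMCovariance {Ω : Type*} [MeasurableSpace Ω] (μ : Measure Ω) (p : ℝ)
    (B : ℝ → Ω → ℝ) : Prop where
  memLp : ∀ t, 0 ≤ t → MemLp (B t) 2 μ
  integral_mul : ∀ s t, 0 ≤ s → 0 ≤ t →
    ∫ ω, B s ω * B t ω ∂μ = (1 / 2) * (s ^ p + t ^ p - |s - t| ^ p)

def increment {Ω : Type*} {n : ℕ} (B : ℝ → Ω → ℝ) (t : Fin (n + 1) → ℝ) (j : Fin n) (ω : Ω) :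
    ℝ :=
  B (t j.succ) ω - B (t j.castSucc) ω

namespace HasFBMCovariance

variable {Ω : Type*} [MeasurableSpace Ω] {μ : Measure Ω} {p : ℝ} {B : ℝ → Ω → ℝ} {a b c d : ℝ}

theorem integral_sub_mul_sub (hB : HasFBMCovariance μ p B) (ha : 0 ≤ a) (hb : 0 ≤ b)
    (hc : 0 ≤ c) (hd : 0 ≤ d) :
    ∫ ω, (B b ω - B a ω) * (B d ω - B c ω) ∂μ =
      (|b - c| ^ p + |a - d| ^ p - |b - d| ^ p - |a - c| ^ p) / 2 := by
  have hint : ∀ {s t}, 0 ≤ s → 0 ≤ t → Integrable (fun ω => B s ω * B t ω) μ :=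
    fun hs ht => (hB.memLp _ hs).integrable_mul (hB.memLp _ ht)
  have hexpand : (fun ω => (B b ω - B a ω) * (B d ω - B c ω)) =
      fun ω => (B b ω * B d ω - B b ω * B c ω) - (B a ω * B d ω - B a ω * B c ω) := by
    ext ω
    ring
  have hb_int : Integrable (fun ω => B b ω * B d ω - B b ω * B c ω) μ :=
    (hint hb hd).sub (hint hb hc)
  have ha_int : Integrable (fun ω => B a ω * B d ω - B a ω * B c ω) μ :=
    (hint ha hd).sub (hint ha hc)
  rw [hexpand, integral_sub hb_int ha_int, integral_sub (hint hb hd) (hint hb hc),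
    integral_sub (hint ha hd) (hint ha hc), hB.integral_mul b d hb hd, hB.integral_mul b c hb hc,
    hB.integral_mul a d ha hd, hB.integral_mul a c ha hc]
  ring

theorem integral_sub_mul_sub_self (hB : HasFBMCovariance μ p B) (hp : p ≠ 0) (ha : 0 ≤ a)
    (hab : a ≤ b) :
    ∫ ω, (B b ω - B a ω) * (B b ω - B a ω) ∂μ = (b - a) ^ p := by
  rw [hB.integral_sub_mul_sub ha (ha.trans hab) ha (ha.trans hab), sub_self, sub_self, abs_zero,
    zero_rpow hp, abs_sub_comm a b, abs_of_nonneg (sub_nonneg.2 hab)]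
  ring

theorem integral_sub_mul_sub_of_le (hB : HasFBMCovariance μ p B) (ha : 0 ≤ a) (hab : a ≤ b)
    (hbc : b ≤ c) (hcd : c ≤ d) :
    ∫ ω, (B b ω - B a ω) * (B d ω - B c ω) ∂μ =
      ((c - b) ^ p + (d - a) ^ p - (d - b) ^ p - (c - a) ^ p) / 2 := by
  rw [hB.integral_sub_mul_sub ha (by linarith) (by linarith) (by linarith), abs_sub_comm b c,
    abs_sub_comm a d, abs_sub_comm b d, abs_sub_comm a c, abs_of_nonneg (by linarith : 0 ≤ c - b),
    abs_of_nonneg (by linarith : 0 ≤ d - a), abs_of_nonneg (by linarith : 0 ≤ d - b),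
    abs_of_nonneg (by linarith : 0 ≤ c - a)]

theorem integral_sub_mul_sub_nonneg (hB : HasFBMCovariance μ p B) (hp : 1 ≤ p) (ha : 0 ≤ a)
    (hab : a ≤ b) (hbc : b ≤ c) (hcd : c ≤ d) :
    0 ≤ ∫ ω, (B b ω - B a ω) * (B d ω - B c ω) ∂μ := by
  have h := (convexOn_rpow hp).map_add_map_le (x := c - b) (y := d - a) (u := c - a) (v := d - b)
    (by simp only [Set.mem_Ici]; linarith) (by simp only [Set.mem_Ici]; linarith)
    (by rw [segment_eq_Icc (by linarith)]; constructor <;> linarith) (by ring)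
  rw [hB.integral_sub_mul_sub_of_le ha hab hbc hcd]
  linarith

theorem integral_sub_mul_sub_nonpos (hB : HasFBMCovariance μ p B) (hp0 : 0 ≤ p) (hp1 : p ≤ 1)
    (ha : 0 ≤ a) (hab : a ≤ b) (hbc : b ≤ c) (hcd : c ≤ d) :
    ∫ ω, (B b ω - B a ω) * (B d ω - B c ω) ∂μ ≤ 0 := by
  have h := (concaveOn_rpow hp0 hp1).map_add_map_le (x := c - b) (y := d - a) (u := c - a)
    (v := d - b) (by simp only [Set.mem_Ici]; linarith) (by simp only [Set.mem_Ici]; linarith)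
    (by rw [segment_eq_Icc (by linarith)]; constructor <;> linarith) (by ring)
  rw [hB.integral_sub_mul_sub_of_le ha hab hbc hcd]
  linarith

variable {n : ℕ} {t : Fin (n + 1) → ℝ}

theorem memLp_increment (hB : HasFBMCovariance μ p B) (ht0 : 0 ≤ t 0) (hmono : Monotone t)
    (j : Fin n) : MemLp (increment B t j) 2 μ :=
  (hB.memLp _ (ht0.trans (hmono (Fin.zero_le _)))).sub
    (hB.memLp _ (ht0.trans (hmono (Fin.zero_le _))))

theorem integral_increment_mul_self (hB : HasFBMCovariance μ p B) (hp : p ≠ 0) (ht0 : 0 ≤ t 0)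
    (hmono : Monotone t) (j : Fin n) :
    ∫ ω, increment B t j ω * increment B t j ω ∂μ = (t j.succ - t j.castSucc) ^ p :=
  hB.integral_sub_mul_sub_self hp (ht0.trans (hmono (Fin.zero_le _)))
    (hmono (Fin.castSucc_le_succ j))

theorem integral_increment_mul_increment_nonneg (hB : HasFBMCovariance μ p B) (hp : 1 ≤ p)
    (ht0 : 0 ≤ t 0) (hmono : Monotone t) (j k : Fin n) :
    0 ≤ ∫ ω, increment B t j ω * increment B t k ω ∂μ := by
  rcases eq_or_ne j k with rfl | hjk
  · rw [hB.integral_increment_mul_self (by linarith) ht0 hmono]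
    exact rpow_nonneg (sub_nonneg.2 (hmono (Fin.castSucc_le_succ j))) _
  wlog hlt : j < k generalizing j k
  · simp_rw [mul_comm (increment B t j _)]
    exact this k j hjk.symm (hjk.lt_or_gt.resolve_left hlt)
  exact hB.integral_sub_mul_sub_nonneg hp (ht0.trans (hmono (Fin.zero_le _)))
    (hmono (Fin.castSucc_le_succ j)) (hmono (Fin.succ_le_castSucc_iff.2 hlt))
    (hmono (Fin.castSucc_le_succ k))

theorem integral_increment_mul_increment_nonpos (hB : HasFBMCovariance μ p B) (hp0 : 0 ≤ p)
    (hp1 : p ≤ 1) (ht0 : 0 ≤ t 0) (hmono : Monotone t) {j k : Fin n} (hjk : j ≠ k) :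
    ∫ ω, increment B t j ω * increment B t k ω ∂μ ≤ 0 := by
  wlog hlt : j < k generalizing j k
  · simp_rw [mul_comm (increment B t j _)]
    exact this hjk.symm (hjk.lt_or_gt.resolve_left hlt)
  exact hB.integral_sub_mul_sub_nonpos hp0 hp1 (ht0.trans (hmono (Fin.zero_le _)))
    (hmono (Fin.castSucc_le_succ j)) (hmono (Fin.succ_le_castSucc_iff.2 hlt))
    (hmono (Fin.castSucc_le_succ k))

theorem sum_sum_integral_increment_mul_increment (hB : HasFBMCovariance μ p B) (hp : p ≠ 0)
    (ht0 : 0 ≤ t 0) (hmono : Monotone t) :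
    ∑ j, ∑ k, ∫ ω, increment B t j ω * increment B t k ω ∂μ = (t (Fin.last n) - t 0) ^ p := by
  have htelescope : ∀ ω, ∑ j, increment B t j ω = B (t (Fin.last n)) ω - B (t 0) ω :=
    fun ω => Fin.sum_succ_sub_castSucc fun i => B (t i) ω
  rw [← integral_sq_sum_eq_sum_sum_integral_mul (hB.memLp_increment ht0 hmono)]
  simp_rw [htelescope, sq]
  exact hB.integral_sub_mul_sub_self hp ht0 (hmono (Fin.zero_le _))

theorem integral_sq_sum_mul_increment_le_of_one_le (hB : HasFBMCovariance μ p B) (hp : 1 ≤ p)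
    (ht0 : 0 ≤ t 0) (hmono : Monotone t) {ε : Fin n → ℝ} (hε : ∀ j, |ε j| ≤ 1) :
    ∫ ω, (∑ j, ε j * increment B t j ω) ^ 2 ∂μ ≤ (t (Fin.last n) - t 0) ^ p := by
  rw [integral_sq_sum_mul_eq_sum_sum_integral_mul (hB.memLp_increment ht0 hmono),
    ← hB.sum_sum_integral_increment_mul_increment (by linarith) ht0 hmono]
  refine (sum_sum_mul_mul_le_sum_sum_abs hε _).trans_eq ?_
  simp_rw [abs_of_nonneg (hB.integral_increment_mul_increment_nonneg hp ht0 hmono _ _)]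

theorem integral_sq_sum_mul_increment_le_of_le_one (hB : HasFBMCovariance μ p B) (hp0 : 0 < p)
    (hp1 : p ≤ 1) (ht0 : 0 ≤ t 0) (hmono : Monotone t) {ε : Fin n → ℝ} (hε : ∀ j, |ε j| ≤ 1) :
    ∫ ω, (∑ j, ε j * increment B t j ω) ^ 2 ∂μ ≤
      2 * (n : ℝ) ^ (1 - p) * (t (Fin.last n) - t 0) ^ p := by
  have hdiag := hB.integral_increment_mul_self hp0.ne' ht0 hmono
  have hgaps : ∀ j : Fin n, 0 ≤ t j.succ - t j.castSucc := fun j =>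
    sub_nonneg.2 (hmono (Fin.castSucc_le_succ j))
  rw [integral_sq_sum_mul_eq_sum_sum_integral_mul (hB.memLp_increment ht0 hmono)]
  calc _ ≤ ∑ j, ∑ k, |∫ ω, increment B t j ω * increment B t k ω ∂μ| :=
        sum_sum_mul_mul_le_sum_sum_abs hε _
    _ = 2 * ∑ j, ∫ ω, increment B t j ω * increment B t j ω ∂μ -
          ∑ j, ∑ k, ∫ ω, increment B t j ω * increment B t k ω ∂μ :=
        sum_sum_abs_eq_of_offDiag_nonpos (fun j => hdiag j ▸ rpow_nonneg (hgaps j) _)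
          fun _ _ => hB.integral_increment_mul_increment_nonpos hp0.le hp1 ht0 hmono
    _ ≤ 2 * ∑ j : Fin n, (t j.succ - t j.castSucc) ^ p := by
        rw [hB.sum_sum_integral_increment_mul_increment hp0.ne' ht0 hmono]
        simp_rw [hdiag]
        linarith [rpow_nonneg (sub_nonneg.2 (hmono (Fin.zero_le (Fin.last n)))) p]
    _ ≤ 2 * ((n : ℝ) ^ (1 - p) * (∑ j : Fin n, (t j.succ - t j.castSucc)) ^ p) := by
        gcongr
        simpa using sum_rpow_le_card_rpow_mul_rpow_sum Finset.univ (fun j _ => hgaps j) hp0.le hp1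
    _ = 2 * (n : ℝ) ^ (1 - p) * (t (Fin.last n) - t 0) ^ p := by
        rw [Fin.sum_succ_sub_castSucc, mul_assoc]

end HasFBMCovariance

theorem fbm_signed_sum_var_general {Ω : Type*} [MeasurableSpace Ω] (μ : Measure Ω)
    (H : ℝ) (hH : H ∈ Set.Ioc (0 : ℝ) 1) (B : ℝ → Ω → ℝ)
    (hmem : ∀ t, 0 ≤ t → MemLp (B t) 2 μ)
    (hcov : ∀ s t, 0 ≤ s → 0 ≤ t →
      ∫ ω, B s ω * B t ω ∂μ =
        (1 / 2) * (s ^ (2 * H) + t ^ (2 * H) - |s - t| ^ (2 * H)))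
    (n : ℕ) (T : ℝ) (t : Fin (n + 1) → ℝ) (ht0 : 0 ≤ t 0) (hmono : Monotone t)
    (htT : t (Fin.last n) ≤ T)
    (ε : Fin n → ℝ) (hε : ∀ j, ε j = 1 ∨ ε j = -1) :
    ∫ ω, (∑ j : Fin n, ε j * (B (t j.succ) ω - B (t j.castSucc) ω)) ^ 2 ∂μ ≤
      2 * T ^ (2 * H) * (n : ℝ) ^ (max (1 - 2 * H) 0) := by
  obtain ⟨hH0, -⟩ := hH
  have hB : HasFBMCovariance μ (2 * H) B := ⟨hmem, hcov⟩
  have hε_abs : ∀ j, |ε j| ≤ 1 := fun j => by rcases hε j with h | h <;> simp [h]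
  have hspan : 0 ≤ t (Fin.last n) - t 0 := sub_nonneg.2 (hmono (Fin.zero_le _))
  have hspan_le : (t (Fin.last n) - t 0) ^ (2 * H) ≤ T ^ (2 * H) :=
    rpow_le_rpow hspan (by linarith) (by linarith)
  rcases le_total 1 (2 * H) with hp | hp
  · rw [max_eq_right (by linarith), rpow_zero, mul_one]
    refine (hB.integral_sq_sum_mul_increment_le_of_one_le hp ht0 hmono hε_abs).trans ?_
    linarith [rpow_nonneg hspan (2 * H)]
  · rw [max_eq_left (by linarith), mul_right_comm]
    calc _ ≤ 2 * (n : ℝ) ^ (1 - 2 * H) * (t (Fin.last n) - t 0) ^ (2 * H) :=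
          hB.integral_sq_sum_mul_increment_le_of_le_one (by linarith) hp ht0 hmono hε_abs
      _ ≤ 2 * (n : ℝ) ^ (1 - 2 * H) * T ^ (2 * H) := by gcongr

/-- For any `H ∈ (0,1]`, any `0 ≤ t_0 ≤ ... ≤ t_n ≤ T`, increments
`Δ_j = B^H_{t_j} - B^H_{t_{j-1}}`, and signs `ε_j ∈ {-1,+1}`, one has
`Var(Σ_{j=1}^n ε_j Δ_j) ≤ 2 T^{2H} n^{(1-2H)_+}` where `(x)_+ = max(x,0)`.
(The variance of the centered sum is its second moment.) -/
theorem fbm_signed_sum_var {Ω : Type*} [MeasurableSpace Ω] (μ : Measure Ω)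
    [IsProbabilityMeasure μ]
    (H : ℝ) (hH : H ∈ Set.Ioc (0 : ℝ) 1) (B : ℝ → Ω → ℝ)
    (hmem : ∀ t, 0 ≤ t → MemLp (B t) 2 μ)
    (hzero : ∀ ω, B 0 ω = 0)
    (hcent : ∀ t, 0 ≤ t → ∫ ω, B t ω ∂μ = 0)
    (hcov : ∀ s t, 0 ≤ s → 0 ≤ t →
      ∫ ω, B s ω * B t ω ∂μ =
        (1 / 2) * (s ^ (2 * H) + t ^ (2 * H) - |s - t| ^ (2 * H)))
    (n : ℕ) (T : ℝ) (t : Fin (n + 1) → ℝ) (ht0 : 0 ≤ t 0) (hmono : Monotone t)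
    (htT : t (Fin.last n) ≤ T)
    (ε : Fin n → ℝ) (hε : ∀ j, ε j = 1 ∨ ε j = -1) :
    ∫ ω, (∑ j : Fin n, ε j * (B (t j.succ) ω - B (t j.castSucc) ω)) ^ 2 ∂μ ≤
      2 * T ^ (2 * H) * (n : ℝ) ^ (max (1 - 2 * H) 0) :=
  fbm_signed_sum_var_general μ H hH B hmem hcov n T t ht0 hmono htT ε hε
end

section
/- Let Δ_1,...,Δ_n be jointly Gaussian centered random variables such that Var(Σ_{j=1}^n ε_j Δ_j) ≤ 2 T^{2H} n^{(1-2H)_+} for all sign choices ε_j ∈ {-1,+1}. Then P[∩_{j=1}^n {|Δ_j| ≥ δ/2}] ≤ 2^n exp(- T^{-2H} δ² n^{1+(2H∧1)} / 16). -/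
open MeasureTheory ProbabilityTheory Real

/-! On the event where every `|Δ j|` is at least `δ / 2`, the signs `ε j = sign (Δ j)` give
`∑ ε j Δ j ≥ n δ / 2`, so the event is covered by `2 ^ n` upper-tail events of centered Gaussians
with variance at most `V = 2 T^{2H} n^{(1-2H)_+}`. The Chernoff bound bounds each of them by
`exp (-(n δ / 2)² / (2 V))`, and this exponent is the one in the statement. -/

section

variable {Ω : Type*} [MeasurableSpace Ω]

lemma measureReal_ge_le_exp_of_map_eq_gaussianReal {p : Measure Ω} [IsProbabilityMeasure p]
    {X : Ω → ℝ} {v : NNReal} {V a : ℝ} (hX : p.map X = gaussianReal 0 v) (hv : v ≤ V)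
    (ha : 0 ≤ a) :
    p.real {ω | a ≤ X ω} ≤ exp (-(a ^ 2 / (2 * V))) := by
  have hV : 0 ≤ V := v.2.trans hv
  have hvV : (v : ℝ) / V ≤ 1 := div_le_one_of_le₀ hv hV
  have htail : 0 ≤ a ^ 2 / (2 * V) := by positivity
  have h_int : Integrable (fun ω ↦ exp (a / V * X ω)) p := by
    rw [← mgf_pos_iff, mgf_gaussianReal hX]
    exact exp_pos _
  -- Chernoff at `t = a / V`; for `V = 0` (so `v = 0`) both sides degenerate to `exp 0` via `a / 0 = 0`.
  calc p.real {ω | a ≤ X ω} ≤ exp (-(a / V) * a) * mgf X p (a / V) :=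
        measure_ge_le_exp_mul_mgf a (div_nonneg ha hV) h_int
    _ = exp (-(2 * (a ^ 2 / (2 * V))) + v / V * (a ^ 2 / (2 * V))) := by
        rw [mgf_gaussianReal hX, ← exp_add]
        ring_nf
    _ ≤ exp (-(a ^ 2 / (2 * V))) := exp_le_exp.2 (by nlinarith)

lemma exists_sign_card_mul_le_sum {ι : Type*} [Fintype ι] (x : ι → ℝ) {c : ℝ}
    (h : ∀ j, c ≤ |x j|) :
    ∃ ε : ι → ℝ, (∀ j, ε j = 1 ∨ ε j = -1) ∧ Fintype.card ι * c ≤ ∑ j, ε j * x j := by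
  refine ⟨fun j ↦ if 0 ≤ x j then 1 else -1, fun j ↦ by by_cases hj : 0 ≤ x j <;> simp [hj], ?_⟩
  have h_sign : ∀ j, (if 0 ≤ x j then 1 else -1) * x j = |x j| := by
    intro j
    split_ifs with hj
    · rw [one_mul, abs_of_nonneg hj]
    · rw [neg_one_mul, abs_of_neg (not_le.1 hj)]
  calc Fintype.card ι * c = ∑ _j : ι, c := by simp
    _ ≤ ∑ j, |x j| := Finset.sum_le_sum fun j _ ↦ h j
    _ = _ := by simp only [h_sign]

lemma measureReal_iInter_le_abs_le {ι : Type*} [Fintype ι] {μ : Measure Ω} [IsFiniteMeasure μ]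
    (X : ι → Ω → ℝ) (c b : ℝ)
    (h : ∀ ε : ι → ℝ, (∀ j, ε j = 1 ∨ ε j = -1) →
      μ.real {ω | Fintype.card ι * c ≤ ∑ j, ε j * X j ω} ≤ b) :
    μ.real (⋂ j, {ω | c ≤ |X j ω|}) ≤ 2 ^ Fintype.card ι * b := by
  classical
  set E := Fintype.piFinset fun _ : ι ↦ ({1, -1} : Finset ℝ)
  have h_cover : ⋂ j, {ω | c ≤ |X j ω|} ⊆
      ⋃ ε ∈ E, {ω | Fintype.card ι * c ≤ ∑ j, ε j * X j ω} := by
    intro ω hω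
    obtain ⟨ε, hε, h_sum⟩ := exists_sign_card_mul_le_sum (fun j ↦ X j ω) (Set.mem_iInter.1 hω)
    exact Set.mem_biUnion (by simpa [E] using hε) h_sum
  calc μ.real (⋂ j, {ω | c ≤ |X j ω|})
      ≤ ∑ ε ∈ E, μ.real {ω | Fintype.card ι * c ≤ ∑ j, ε j * X j ω} :=
        (measureReal_mono h_cover (measure_ne_top _ _)).trans (measureReal_biUnion_finset_le _ _)
    _ ≤ ∑ _ε ∈ E, b := Finset.sum_le_sum fun ε hε ↦ h ε (by simpa [E] using hε)
    _ = 2 ^ Fintype.card ι * b := by simp [E, Finset.card_pair (by norm_num : (1 : ℝ) ≠ -1)]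

end

lemma fluctuation_exponent_eq {H T n : ℝ} (δ : ℝ) (hH : 0 < H) (hT : 0 < T) (hn : 0 ≤ n) :
    T ^ (-(2 * H)) * δ ^ 2 * n ^ (1 + min (2 * H) 1) / 16 =
      (n * (δ / 2)) ^ 2 / (2 * (2 * T ^ (2 * H) * n ^ (max (1 - 2 * H) 0))) := by
  rcases hn.eq_or_lt with rfl | hn
  · have : 1 + min (2 * H) 1 ≠ 0 := by positivity
    simp [zero_rpow this]
  have h_n : n ^ (1 + min (2 * H) 1) * n ^ (max (1 - 2 * H) 0) = n ^ 2 := by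
    rw [← rpow_add hn, ← rpow_natCast]
    congr 1
    rcases le_total (2 * H) 1 with h | h
    · rw [min_eq_left h, max_eq_left (by linarith)]; norm_num
    · rw [min_eq_right h, max_eq_right (by linarith)]; norm_num
  have h_T : T ^ (-(2 * H)) * T ^ (2 * H) = 1 := by
    rw [← rpow_add hT, neg_add_cancel, rpow_zero]
  rw [eq_div_iff (by positivity)]
  calc _ = δ ^ 2 / 4 * (n ^ (1 + min (2 * H) 1) * n ^ (max (1 - 2 * H) 0)) *
        (T ^ (-(2 * H)) * T ^ (2 * H)) := by ring
    _ = (n * (δ / 2)) ^ 2 := by rw [h_n, h_T]; ring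

theorem gaussian_joint_fluctuation_bound_general {Ω : Type*} [MeasurableSpace Ω] (μ : Measure Ω)
    [IsProbabilityMeasure μ]
    (H T δ : ℝ) (hH : H ∈ Set.Ioc (0 : ℝ) 1) (hT : 0 < T) (hδ : 0 < δ)
    (n : ℕ) (Δ : Fin n → Ω → ℝ)
    (hgauss : ∀ ε : Fin n → ℝ, (∀ j, ε j = 1 ∨ ε j = -1) →
      ∃ v : NNReal, μ.map (fun ω => ∑ j : Fin n, ε j * Δ j ω) = gaussianReal 0 v ∧
        (v : ℝ) ≤ 2 * T ^ (2 * H) * (n : ℝ) ^ (max (1 - 2 * H) 0)) :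
    (μ (⋂ j : Fin n, {ω : Ω | δ / 2 ≤ |Δ j ω|})).toReal ≤
      2 ^ n * Real.exp (-(T ^ (-(2 * H)) * δ ^ 2 * (n : ℝ) ^ (1 + min (2 * H) 1) / 16)) := by
  rw [← measureReal_def, fluctuation_exponent_eq δ hH.1 hT n.cast_nonneg]
  have h_union := measureReal_iInter_le_abs_le Δ (δ / 2) _ fun ε hε ↦ by
    obtain ⟨v, h_map, hv⟩ := hgauss ε hε
    exact measureReal_ge_le_exp_of_map_eq_gaussianReal h_map hv (by positivity)
  simpa using h_union

/-- Let `Δ_1,...,Δ_n` be jointly Gaussian centered random variables (so that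
every signed sum `Σ ε_j Δ_j` is a centered Gaussian) such that
`Var(Σ_{j=1}^n ε_j Δ_j) ≤ 2 T^{2H} n^{(1-2H)_+}` for all sign choices `ε_j ∈ {-1,+1}`.
Then `P[∩_{j=1}^n {|Δ_j| ≥ δ/2}] ≤ 2^n exp(-T^{-2H} δ² n^{1+(2H∧1)} / 16)`. -/
theorem gaussian_joint_fluctuation_bound {Ω : Type*} [MeasurableSpace Ω] (μ : Measure Ω)
    [IsProbabilityMeasure μ]
    (H T δ : ℝ) (hH : H ∈ Set.Ioc (0 : ℝ) 1) (hT : 0 < T) (hδ : 0 < δ)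
    (n : ℕ) (Δ : Fin n → Ω → ℝ) (hmeas : ∀ j, Measurable (Δ j))
    (hgauss : ∀ ε : Fin n → ℝ, (∀ j, ε j = 1 ∨ ε j = -1) →
      ∃ v : NNReal, μ.map (fun ω => ∑ j : Fin n, ε j * Δ j ω) = gaussianReal 0 v ∧
        (v : ℝ) ≤ 2 * T ^ (2 * H) * (n : ℝ) ^ (max (1 - 2 * H) 0)) :
    (μ (⋂ j : Fin n, {ω : Ω | δ / 2 ≤ |Δ j ω|})).toReal ≤
      2 ^ n * Real.exp (-(T ^ (-(2 * H)) * δ ^ 2 * (n : ℝ) ^ (1 + min (2 * H) 1) / 16)) :=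
  gaussian_joint_fluctuation_bound_general μ H T δ hH hT hδ n Δ hgauss
end
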